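/- Let P0 be the joint law of a random pair (Z, E) taking values in 𝒵 × ℰ with Z real-valued and E_{P0}[e^{λZ}] < ∞ for every λ ∈ ℝ. Suppose the infimum inf_{λ∈ℝ} E_{P0}[ e^{λ E_{P0}[Z|E]} ] is attained at some λ* ∈ ℝ. Then the probability measure Q defined by dQ(z,e) = e^{λ* E_{P0}[Z|E=e]} / E_{P0}[ e^{λ* E_{P0}[Z|E]} ] dP0(z,e) attains the supremum defining the directional s-value; that is, Q(·|E=e) = P0(·|E=e) for all e ∈ ℰ, E_Q[Z] = 0, and exp(−D_KL(Q‖P0)) = inf_{λ∈ℝ} E_{P0}[ e^{λ E_{P0}[Z|E]} ]. -/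

import Mathlib

open MeasureTheory ProbabilityTheory Real
open scoped ENNReal NNReal Classical

/-- Kullback–Leibler divergence `D_KL(P‖P₀)`, valued in `ℝ≥0∞`: it is the integral
`∫ log (dP/dP₀) dP` when `P ≪ P₀` (and the integrand is integrable), and `+∞` otherwise. -/
noncomputable def KLdiv {α : Type*} [MeasurableSpace α] (P P₀ : Measure α) : ℝ≥0∞ :=
  if P ≪ P₀ ∧ Integrable (llr P P₀) P then ENNReal.ofReal (∫ x, llr P P₀ x ∂P) else ⊤

/-- `exp(−D_KL(P‖P₀))`, with the convention `exp(−∞) = 0`. -/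
noncomputable def expNegKL {α : Type*} [MeasurableSpace α] (P P₀ : Measure α) : ℝ :=
  if KLdiv P P₀ = ⊤ then 0 else Real.exp (-(KLdiv P P₀).toReal)

/-- The conditional distribution kernel `e ↦ P(· | E = e)` of the first coordinate `Z` given the
second coordinate `E`, for a finite measure `P` on a product space `𝒵 × ℰ`. -/
noncomputable def condKer {𝒵 ℰ : Type*} [MeasurableSpace 𝒵] [MeasurableSpace ℰ]
    [StandardBorelSpace 𝒵] [Nonempty 𝒵] (P : Measure (𝒵 × ℰ)) [IsFiniteMeasure P] :
    Kernel ℰ 𝒵 :=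
  haveI : IsFiniteMeasure (P.map Prod.swap) := Measure.isFiniteMeasure_map P Prod.swap
  (P.map Prod.swap).condKernel

/-- The statement that `P(· | E = e) = P₀(· | E = e)` for all `e`: the measure `P` on `𝒵 × ℰ`
is obtained from `P₀` by changing only the marginal distribution of the second coordinate `E`,
i.e. `P` (with coordinates swapped) is the composition of its `E`-marginal with the conditional
kernel of `P₀`. -/
def SameCondDist {𝒵 ℰ : Type*} [MeasurableSpace 𝒵] [MeasurableSpace ℰ]
    [StandardBorelSpace 𝒵] [Nonempty 𝒵] (P : Measure (𝒵 × ℰ)) (P₀ : Measure (𝒵 × ℰ))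
    [IsFiniteMeasure P₀] : Prop :=
  P.map Prod.swap = (P.map Prod.snd) ⊗ₘ condKer P₀

/-! Write `X = E_{P₀}[Z | E]`; conditional Jensen gives `e^{λX} ≤ E_{P₀}[e^{λZ} | E]`, so the
moment generating function `M` of `X` is finite everywhere and `Q` is the exponential tilt of
`P₀` by `λ* X`. Its density is a function of `E` alone, so tilting leaves the conditional law of
`Z` given `E` unchanged, and by the tower property `E_Q[Z] = E_Q[X] = (log M)'(λ*) = 0` since
`λ*` minimises `M`. Finally `log (dQ/dP₀) = λ* X - log M(λ*)`, whence
`D_KL(Q‖P₀) = λ* E_Q[X] - log M(λ*) = -log M(λ*)`. -/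

namespace MeasureTheory.Measure

variable {α β : Type*} [MeasurableSpace α] [MeasurableSpace β]

lemma map_withDensity_comp (μ : Measure α) {f : α → β} (hf : Measurable f) {w : β → ℝ≥0∞}
    (hw : Measurable w) : (μ.withDensity (w ∘ f)).map f = (μ.map f).withDensity w := by
  ext s hs
  rw [map_apply hf hs, withDensity_apply _ (hf hs), withDensity_apply _ hs,
    setLIntegral_map hs hw hf]
  rfl

lemma withDensity_compProd (μ : Measure α) [SFinite μ] (κ : Kernel α β) [IsSFiniteKernel κ]
    {w : α → ℝ≥0∞} (hw : Measurable w) :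
    μ.withDensity w ⊗ₘ κ = (μ ⊗ₘ κ).withDensity (fun p ↦ w p.1) := by
  ext s hs
  rw [compProd_apply hs, withDensity_apply _ hs, ← lintegral_indicator hs,
    lintegral_compProd (f := s.indicator fun p ↦ w p.1) ((hw.comp measurable_fst).indicator hs),
    lintegral_withDensity_eq_lintegral_mul _ hw (Kernel.measurable_kernel_prodMk_left hs)]
  congr with a
  exact (lintegral_indicator_const (measurable_prodMk_left hs) (w a)).symm

end MeasureTheory.Measure

section CondKer

variable {𝒵 ℰ : Type*} [MeasurableSpace 𝒵] [MeasurableSpace ℰ] [StandardBorelSpace 𝒵] [Nonempty 𝒵]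

instance (P : Measure (𝒵 × ℰ)) [IsFiniteMeasure P] : IsMarkovKernel (condKer P) := by
  unfold condKer; infer_instance

lemma sameCondDist_self (P : Measure (𝒵 × ℰ)) [IsFiniteMeasure P] : SameCondDist P P := by
  have h := (P.map Prod.swap).disintegrate (P.map Prod.swap).condKernel
  rw [Measure.fst_map_swap] at h
  exact h.symm

lemma SameCondDist.withDensity_comp_snd {P P₀ : Measure (𝒵 × ℰ)} [SFinite P] [IsFiniteMeasure P₀]
    (h : SameCondDist P P₀) {w : ℰ → ℝ≥0∞} (hw : Measurable w) :
    SameCondDist (P.withDensity (fun p ↦ w p.2)) P₀ := by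
  calc (P.withDensity fun p ↦ w p.2).map Prod.swap
      = (P.map Prod.swap).withDensity (fun q ↦ w q.1) :=
        P.map_withDensity_comp measurable_swap (hw.comp measurable_fst)
    _ = (P.map Prod.snd).withDensity w ⊗ₘ condKer P₀ := by
        rw [h, Measure.withDensity_compProd _ _ hw]
    _ = _ := by rw [← P.map_withDensity_comp measurable_snd hw]; rfl

lemma SameCondDist.integral_eq {E : Type*} [NormedAddCommGroup E] [NormedSpace ℝ E]
    {P P₀ : Measure (𝒵 × ℰ)} [SFinite P] [IsFiniteMeasure P₀] (h : SameCondDist P P₀)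
    {f : 𝒵 × ℰ → E} (hfm : StronglyMeasurable f) (hf : Integrable f P) :
    ∫ p, f p ∂P = ∫ p, ∫ z, f (z, p.2) ∂condKer P₀ p.2 ∂P := by
  have hfs : StronglyMeasurable (f ∘ Prod.swap) := hfm.comp_measurable measurable_swap
  have hint : Integrable (f ∘ Prod.swap) (P.map Prod.snd ⊗ₘ condKer P₀) := by
    rw [← h]
    exact (integrable_map_measure hfs.aestronglyMeasurable measurable_swap.aemeasurable).2 hf
  calc ∫ p, f p ∂P = ∫ q, f q.swap ∂(P.map Prod.swap) :=
        (integral_map measurable_swap.aemeasurable hfs.aestronglyMeasurable).symm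
    _ = ∫ e, ∫ z, f (z, e) ∂condKer P₀ e ∂(P.map Prod.snd) := by
        rw [h, Measure.integral_compProd (f := fun q ↦ f q.swap) hint]; rfl
    _ = _ := integral_map measurable_snd.aemeasurable
        hfs.integral_kernel_prod_right'.aestronglyMeasurable

lemma integrable_condKer_of_integrable_comp_fst {E : Type*} [NormedAddCommGroup E]
    (P : Measure (𝒵 × ℰ)) [IsFiniteMeasure P] {f : 𝒵 → E} (hfm : StronglyMeasurable f)
    (hf : Integrable (fun p ↦ f p.1) P) :
    (∀ᵐ e ∂P.map Prod.snd, Integrable f (condKer P e)) ∧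
      Integrable (fun e ↦ ∫ z, ‖f z‖ ∂condKer P e) (P.map Prod.snd) := by
  have hfs : StronglyMeasurable (fun q : ℰ × 𝒵 ↦ f q.2) := hfm.comp_measurable measurable_snd
  rw [← Measure.integrable_compProd_iff hfs.aestronglyMeasurable, ← sameCondDist_self P]
  exact (integrable_map_measure hfs.aestronglyMeasurable measurable_swap.aemeasurable).2 hf

end CondKer

lemma exp_mul_integral_le_integral_exp_mul {ν : Measure ℝ} [IsProbabilityMeasure ν] (l : ℝ)
    (hz : Integrable id ν) (hexp : Integrable (fun z ↦ exp (l * z)) ν) :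
    exp (l * ∫ z, z ∂ν) ≤ ∫ z, exp (l * z) ∂ν :=
  (convexOn_exp.comp_linearMap (LinearMap.lsmul ℝ ℝ l)).map_integral_le
    (by fun_prop) isClosed_univ (by simp) hz hexp

section Tilted

variable {Ω : Type*} [MeasurableSpace Ω] {μ : Measure Ω}

lemma mem_interior_integrableExpSet_of_forall {X : Ω → ℝ}
    (h : ∀ t, Integrable (fun ω ↦ exp (t * X ω)) μ) (t : ℝ) :
    t ∈ interior (integrableExpSet X μ) := by
  simp [show integrableExpSet X μ = Set.univ from Set.eq_univ_of_forall h]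

lemma integral_tilted_mul_self_eq_zero_of_isLocalMin [IsProbabilityMeasure μ] {X : Ω → ℝ} {t : ℝ}
    (ht : t ∈ interior (integrableExpSet X μ)) (hmin : IsLocalMin (mgf X μ) t) :
    ∫ ω, X ω ∂μ.tilted (t * X ·) = 0 := by
  rw [integral_tilted_mul_self ht]
  refine IsLocalMin.deriv_eq_zero ?_
  filter_upwards [hmin] with u hu
  exact log_le_log (mgf_pos (interior_subset (s := integrableExpSet X μ) ht)) hu

lemma integrable_exp_mul_of_memLp_two {X Y : Ω → ℝ} (hXm : AEStronglyMeasurable X μ)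
    (hX : Integrable (fun ω ↦ exp (2 * X ω)) μ) (hY : MemLp Y 2 μ) :
    Integrable (fun ω ↦ exp (X ω) * Y ω) μ := by
  have hexp : MemLp (fun ω ↦ exp (X ω)) 2 μ := by
    refine (memLp_two_iff_integrable_sq (continuous_exp.comp_aestronglyMeasurable hXm)).2 ?_
    refine hX.congr (ae_of_all _ fun ω ↦ ?_)
    dsimp only
    rw [sq, ← exp_add, two_mul]
  exact hexp.integrable_mul hY

lemma KLdiv_tilted [IsProbabilityMeasure μ] {f : Ω → ℝ} (hf : Integrable (fun x ↦ exp (f x)) μ)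
    (hfQ : Integrable f (μ.tilted f)) :
    KLdiv (μ.tilted f) μ = ENNReal.ofReal (∫ x, f x ∂μ.tilted f - log (∫ x, exp (f x) ∂μ)) := by
  have := isProbabilityMeasure_tilted hf
  have hac := tilted_absolutelyContinuous μ f
  have hllr : llr (μ.tilted f) μ =ᵐ[μ.tilted f] fun x ↦ f x - log (∫ x, exp (f x) ∂μ) := by
    refine hac.ae_le ?_
    filter_upwards [llr_tilted_left Measure.AbsolutelyContinuous.rfl hf
      (aemeasurable_of_aemeasurable_exp hf.1.aemeasurable), llr_self μ] with x hx hx0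
    simp [hx, hx0]
  have hint : Integrable (llr (μ.tilted f) μ) (μ.tilted f) :=
    (hfQ.sub (integrable_const _)).congr hllr.symm
  rw [KLdiv, if_pos ⟨hac, hint⟩, integral_congr_ae hllr, integral_sub hfQ (integrable_const _),
    integral_const]
  simp

end Tilted

lemma expNegKL_eq_of_KLdiv_eq_ofReal_neg_log {α : Type*} [MeasurableSpace α] {P P₀ : Measure α}
    {M : ℝ} (hM : 0 < M) (hM1 : M ≤ 1) (h : KLdiv P P₀ = ENNReal.ofReal (-log M)) :
    expNegKL P P₀ = M := by
  rw [expNegKL, h, if_neg ENNReal.ofReal_ne_top,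
    ENNReal.toReal_ofReal (neg_nonneg.2 (log_nonpos hM.le hM1)), neg_neg, exp_log hM]

lemma integrable_exp_mul_integral_condKer {ℰ : Type*} [MeasurableSpace ℰ]
    {P : Measure (ℝ × ℰ)} [IsProbabilityMeasure P]
    (hmgf : ∀ l : ℝ, Integrable (fun p ↦ exp (l * p.1)) P) (l : ℝ) :
    Integrable (fun p ↦ exp (l * ∫ z, z ∂condKer P p.2)) P := by
  have hm : Measurable fun e ↦ exp (l * ∫ z, z ∂condKer P e) :=
    ((stronglyMeasurable_id.integral_kernel (κ := condKer P)).measurable.const_mul l).exp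
  obtain ⟨hz, -⟩ := integrable_condKer_of_integrable_comp_fst P stronglyMeasurable_id
    (integrable_of_mem_interior_integrableExpSet (mem_interior_integrableExpSet_of_forall hmgf 0))
  obtain ⟨hexp, hG⟩ := integrable_condKer_of_integrable_comp_fst P
    (f := fun z ↦ exp (l * z)) (measurable_const_mul l).exp.stronglyMeasurable (hmgf l)
  refine (integrable_map_measure hm.aestronglyMeasurable measurable_snd.aemeasurable).1
    (hG.mono' hm.aestronglyMeasurable ?_)
  filter_upwards [hz, hexp] with e hze hexpe
  simp only [norm_eq_abs, abs_exp]
  exact exp_mul_integral_le_integral_exp_mul l hze hexpe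

/-- if `inf_λ E_{P₀}[e^{λ E_{P₀}[Z|E]}]` is attained at `λ*`, then the tilted
measure `dQ(z,e) = e^{λ* E_{P₀}[Z|E=e]} / E_{P₀}[e^{λ* E_{P₀}[Z|E]}] dP₀(z,e)` attains the
supremum defining the directional s-value: `Q(·|E=e) = P₀(·|E=e)` for all `e`, `E_Q[Z] = 0`,
and `exp(−D_KL(Q‖P₀)) = inf_λ E_{P₀}[e^{λ E_{P₀}[Z|E]}]`. -/
theorem tilted_measure_attains_directional_svalue {ℰ : Type*} [MeasurableSpace ℰ]
    (P₀ : Measure (ℝ × ℰ)) [IsProbabilityMeasure P₀]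
    (hmgf : ∀ l : ℝ, Integrable (fun p => Real.exp (l * p.1)) P₀)
    (lstar : ℝ)
    (hmin : ∀ l : ℝ, ∫ p, Real.exp (lstar * ∫ z, z ∂(condKer P₀ p.2)) ∂P₀
        ≤ ∫ p, Real.exp (l * ∫ z, z ∂(condKer P₀ p.2)) ∂P₀) :
    let Q : Measure (ℝ × ℰ) := P₀.withDensity
      (fun p => ENNReal.ofReal (Real.exp (lstar * ∫ z, z ∂(condKer P₀ p.2)) /
        ∫ q, Real.exp (lstar * ∫ z, z ∂(condKer P₀ q.2)) ∂P₀))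
    IsProbabilityMeasure Q ∧ SameCondDist Q P₀ ∧
      Integrable (fun p => p.1) Q ∧ ∫ p, p.1 ∂Q = 0 ∧
      expNegKL Q P₀ = ⨅ l : ℝ, ∫ p, Real.exp (l * ∫ z, z ∂(condKer P₀ p.2)) ∂P₀ := by
  intro Q
  set X : ℝ × ℰ → ℝ := fun p ↦ ∫ z, z ∂condKer P₀ p.2
  have hg : Measurable fun e ↦ ∫ z, z ∂condKer P₀ e :=
    (stronglyMeasurable_id.integral_kernel (κ := condKer P₀)).measurable
  have hXm : Measurable X := hg.comp measurable_snd
  have hX : ∀ l, Integrable (fun p ↦ exp (l * X p)) P₀ := integrable_exp_mul_integral_condKer hmgf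
  have hlstar := mem_interior_integrableExpSet_of_forall hX lstar
  have hQ : Q = P₀.tilted (lstar * X ·) := rfl
  have hQprob : IsProbabilityMeasure Q := hQ ▸ isProbabilityMeasure_tilted (hX lstar)
  have hXQ : ∫ p, X p ∂Q = 0 :=
    integral_tilted_mul_self_eq_zero_of_isLocalMin hlstar (Filter.Eventually.of_forall hmin)
  have hcond : SameCondDist Q P₀ := (sameCondDist_self P₀).withDensity_comp_snd
    (w := fun e ↦ ENNReal.ofReal (exp (lstar * ∫ z, z ∂condKer P₀ e) / mgf X P₀ lstar))
    (by fun_prop)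
  have hZ : Integrable (fun p ↦ p.1) Q := by
    rw [hQ, integrable_tilted_iff (hX lstar)]
    simpa only [smul_eq_mul] using integrable_exp_mul_of_memLp_two
      (hXm.const_mul lstar).aestronglyMeasurable
      (by simpa only [mul_assoc] using hX (2 * lstar))
      (memLp_of_mem_interior_integrableExpSet (mem_interior_integrableExpSet_of_forall hmgf 0) 2)
  have hKL := KLdiv_tilted (hX lstar)
    (((memLp_tilted_mul hlstar 1).integrable le_rfl).const_mul lstar)
  rw [← hQ, integral_const_mul, hXQ, mul_zero, zero_sub] at hKL
  refine ⟨hQprob, hcond, hZ, (hcond.integral_eq measurable_fst.stronglyMeasurable hZ).trans hXQ, ?_⟩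
  rw [expNegKL_eq_of_KLdiv_eq_ofReal_neg_log (mgf_pos (hX lstar)) ((hmin 0).trans_eq (by simp)) hKL]
  exact (ciInf_eq_of_forall_ge_of_forall_gt_exists_lt hmin fun _ hw ↦ ⟨lstar, hw⟩).symm
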